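/- arXiv:1107.0112 — 2 statements merged into one kernel-verified Lean document; each statement's English description precedes it below -/
import Mathlib

section
/- Both roots of the quadratic λ² − sλ + p = 0, with s real and negative and p ∈ ℂ, have negative real part if and only if Re(p) > 0 and (Im(p))² < (Re(p))·s². -/
lemma re_cpow_half_nonneg (z : ℂ) : 0 ≤ (z ^ ((1 : ℂ) / 2)).re := by
  rcases eq_or_ne z 0 with h | h
  · simp [h, Complex.zero_cpow (by norm_num : (1 : ℂ) / 2 ≠ 0)]
  · rw [Complex.cpow_def_of_ne_zero h, Complex.exp_re]
    have him : (Complex.log z * (1 / 2 : ℂ)).im = z.arg / 2 := by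
      simp [Complex.mul_im, Complex.log_im]
      ring
    rw [him]
    have h1 := Complex.neg_pi_lt_arg z
    have h2 := Complex.arg_le_pi z
    have := Real.cos_nonneg_of_neg_pi_div_two_le_of_le (x := z.arg / 2)
      (by linarith) (by linarith)
    positivity

/-- For s real negative and p ∈ ℂ, both roots
λ± = (s ± sqrt(s² − 4p))/2 of λ² − sλ + p = 0 have negative real part iff
Re(p) > 0 and (Im p)² < Re(p)·s², equivalently iff Re(p) > 0 and s²·Re(p) > (Im p)². -/
theorem both_roots_neg_re_iff (s : ℝ) (hs : s < 0) (p : ℂ) :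
    ((((s : ℂ) + ((s : ℂ) ^ 2 - 4 * p) ^ ((1 : ℂ) / 2)) / 2).re < 0 ∧
     (((s : ℂ) - ((s : ℂ) ^ 2 - 4 * p) ^ ((1 : ℂ) / 2)) / 2).re < 0
      ↔ (0 < p.re ∧ p.im ^ 2 < p.re * s ^ 2)) ∧
    ((((s : ℂ) + ((s : ℂ) ^ 2 - 4 * p) ^ ((1 : ℂ) / 2)) / 2).re < 0 ∧
     (((s : ℂ) - ((s : ℂ) ^ 2 - 4 * p) ^ ((1 : ℂ) / 2)) / 2).re < 0
      ↔ (0 < p.re ∧ p.im ^ 2 < s ^ 2 * p.re)) := by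
  set z : ℂ := (s : ℂ) ^ 2 - 4 * p with hz
  set w : ℂ := z ^ ((1 : ℂ) / 2) with hw
  have hre : 0 ≤ w.re := re_cpow_half_nonneg z
  have hw2 : w ^ 2 = z := by
    rw [hw, one_div]
    exact_mod_cast Complex.cpow_ofNat_inv_pow z 2
  have h1 : w.re ^ 2 - w.im ^ 2 = s ^ 2 - 4 * p.re := by
    have := congrArg Complex.re hw2
    simp [hz, pow_two, Complex.mul_re] at this
    linarith [this]
  have h2 : 2 * (w.re * w.im) = -(4 * p.im) := by
    have := congrArg Complex.im hw2
    simp [hz, pow_two, Complex.mul_im] at this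
    linarith [this]
  have hdiv : ∀ x : ℂ, (x / 2).re = x.re / 2 := by
    intro x
    simp [Complex.div_re, Complex.normSq]
  have hb2 : (w.re * w.im) ^ 2 = 4 * p.im ^ 2 := by
    have h3 : w.re * w.im = -(2 * p.im) := by linarith
    rw [h3]; ring
  have hs2 : 0 < s ^ 2 := by nlinarith
  have main : (((s : ℂ) + w) / 2).re < 0 ∧ (((s : ℂ) - w) / 2).re < 0 ↔
      (0 < p.re ∧ p.im ^ 2 < s ^ 2 * p.re) := by
    rw [hdiv, hdiv, Complex.add_re, Complex.sub_re, Complex.ofReal_re]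
    constructor
    · rintro ⟨ha, hb⟩
      have hx : w.re < -s := by linarith
      have hx2 : w.re ^ 2 < s ^ 2 := by nlinarith
      have key : 0 < (s ^ 2 - w.re ^ 2) * (s ^ 2 + w.im ^ 2) := by
        exact mul_pos (by linarith) (by nlinarith [sq_nonneg w.im])
      constructor
      · nlinarith [key, sq_nonneg w.im, sq_nonneg s]
      · nlinarith [key, hb2, h1, sq_nonneg s]
    · rintro ⟨ha, hb⟩
      have key : 0 < (s ^ 2 - w.re ^ 2) * (s ^ 2 + w.im ^ 2) := by
        nlinarith [hb2, h1, sq_nonneg s]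
      have hx2 : w.re ^ 2 < s ^ 2 := by nlinarith [sq_nonneg w.im]
      have hx : w.re < -s := by nlinarith [hre]
      constructor <;> linarith
  constructor
  · rw [show p.re * s ^ 2 = s ^ 2 * p.re from mul_comm _ _]
    exact main
  · exact main
end

section
/- For positive constants α, β_φ, β_ρ and p ≥ 1, the eigenvalues λ±_k of the mode-k Hasegawa–Wakatani linearization satisfy λ⁺_k/K^p → −min(β_φ, β_ρ) and λ⁻_k/K^p → −max(β_φ, β_ρ) as K = k_x² + k_y² → ∞ along modes with fixed k_y, where λ±_k = ((a+d) ± sqrt((a+d)² − 4(ad−bc)))/2 with a = −α/K − β_φ K^p, d = −α − β_ρ K^p, bc = (α/K)(α − i k_y κ). -/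
open Filter Topology

/-!
Divide everything by `s = K ^ p`. The rescaled trace `(a + d) / s` tends to `-β_φ - β_ρ` and the
rescaled determinant `(a d - b c) / s²` to `β_φ β_ρ`, since `b c = O(1 / K)`. Because the
principal square root commutes with multiplication by the positive real `s²`, the rescaled
eigenvalues are the roots of the rescaled characteristic polynomial, and these converge to the
roots `-β_φ`, `-β_ρ` of the limiting one: the principal root is continuous at the nonnegative
real limit `(β_φ - β_ρ)²` of the discriminant, where it picks out `|β_φ - β_ρ|`.
-/

namespace Complex

theorem sqrt_ofReal_sq_mul {t : ℝ} (ht : 0 ≤ t) (z : ℂ) :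
    sqrt ((t : ℂ) ^ 2 * z) = t * sqrt z := by
  rcases ht.eq_or_lt with rfl | ht
  · simp [sqrt]
  rcases eq_or_ne z 0 with rfl | hz
  · simp
  have ht2 : (0 : ℝ) < t ^ 2 := by positivity
  have ht2' : ((t ^ 2 : ℝ) : ℂ) ≠ 0 := ofReal_ne_zero.mpr ht2.ne'
  rw [← ofReal_pow, sqrt, sqrt, cpow_def_of_ne_zero (mul_ne_zero ht2' hz),
    log_ofReal_mul ht2 hz, add_mul, exp_add, ofReal_log ht2.le, ← cpow_def_of_ne_zero ht2',
    ← cpow_def_of_ne_zero hz, ← sqrt, sqrt_of_nonneg (zero_le_real.mpr ht2.le), ofReal_re,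
    Real.sqrt_sq ht.le]

end Complex

section AbsFormulas

variable {α : Type*} [Field α] [LinearOrder α] [IsStrictOrderedRing α]

theorem add_add_abs_sub_div_two_eq_max (a b : α) : (a + b + |a - b|) / 2 = max a b := by
  rcases le_total a b with h | h
  · rw [abs_of_nonpos (sub_nonpos.mpr h), max_eq_right h]; ring
  · rw [abs_of_nonneg (sub_nonneg.mpr h), max_eq_left h]; ring

theorem add_sub_abs_sub_div_two_eq_min (a b : α) : (a + b - |a - b|) / 2 = min a b := by
  rcases le_total a b with h | h
  · rw [abs_of_nonpos (sub_nonpos.mpr h), min_eq_left h]; ring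
  · rw [abs_of_nonneg (sub_nonneg.mpr h), min_eq_right h]; ring

end AbsFormulas

section QuadraticRoots

variable {ι : Type*} {l : Filter ι} {τ δ : ι → ℂ} {s : ι → ℝ} {A D : ℝ}

theorem tendsto_sqrt_discr_div (hs : ∀ᶠ i in l, 0 < s i)
    (hτ : Tendsto (fun i => τ i / s i) l (𝓝 ((A + D : ℝ) : ℂ)))
    (hδ : Tendsto (fun i => δ i / (s i : ℂ) ^ 2) l (𝓝 ((A * D : ℝ) : ℂ))) :
    Tendsto (fun i => Complex.sqrt (τ i ^ 2 - 4 * δ i) / s i) l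
      (𝓝 ((|A - D| : ℝ) : ℂ)) := by
  have hdiscr : Tendsto (fun i => (τ i / s i) ^ 2 - 4 * (δ i / (s i : ℂ) ^ 2)) l
      (𝓝 (((A - D) ^ 2 : ℝ) : ℂ)) := by
    convert (hτ.pow 2).sub (hδ.const_mul 4) using 2
    push_cast
    ring
  have hsqrt := ((Complex.continuousAt_sqrt (z := (((A - D) ^ 2 : ℝ) : ℂ))
    (Or.inl (by rw [Complex.ofReal_re]; positivity))).tendsto.comp hdiscr)
  rw [Complex.sqrt_of_nonneg (Complex.zero_le_real.mpr (sq_nonneg _)), Complex.ofReal_re,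
    Real.sqrt_sq_eq_abs] at hsqrt
  refine hsqrt.congr' ?_
  filter_upwards [hs] with i hi
  have hi' : (s i : ℂ) ≠ 0 := Complex.ofReal_ne_zero.mpr hi.ne'
  have hfactor : τ i ^ 2 - 4 * δ i =
      (s i : ℂ) ^ 2 * ((τ i / s i) ^ 2 - 4 * (δ i / (s i : ℂ) ^ 2)) := by
    field_simp
  rw [Function.comp_apply, hfactor, Complex.sqrt_ofReal_sq_mul hi.le, mul_div_cancel_left₀ _ hi']

theorem tendsto_quadratic_roots_div (hs : ∀ᶠ i in l, 0 < s i)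
    (hτ : Tendsto (fun i => τ i / s i) l (𝓝 ((A + D : ℝ) : ℂ)))
    (hδ : Tendsto (fun i => δ i / (s i : ℂ) ^ 2) l (𝓝 ((A * D : ℝ) : ℂ))) :
    Tendsto (fun i => (τ i + Complex.sqrt (τ i ^ 2 - 4 * δ i)) / 2 / s i) l
      (𝓝 ((max A D : ℝ) : ℂ)) ∧
    Tendsto (fun i => (τ i - Complex.sqrt (τ i ^ 2 - 4 * δ i)) / 2 / s i) l
      (𝓝 ((min A D : ℝ) : ℂ)) := by
  have hsqrt := tendsto_sqrt_discr_div hs hτ hδ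
  constructor
  · convert (hτ.add hsqrt).div_const 2 using 2 with i
    · ring
    · rw [← add_add_abs_sub_div_two_eq_max]; push_cast; ring
  · convert (hτ.sub hsqrt).div_const 2 using 2 with i
    · ring
    · rw [← add_sub_abs_sub_div_two_eq_min]; push_cast; ring

end QuadraticRoots

theorem tendsto_sub_mul_div_self {ι : Type*} {l : Filter ι} {u s : ι → ℝ} {c : ℝ} (b : ℝ)
    (hu : Tendsto u l (𝓝 c)) (hs : Tendsto s l atTop) :
    Tendsto (fun i => (u i - b * s i) / s i) l (𝓝 (-b)) := by
  have h := (hu.div_atTop hs).sub (tendsto_const_nhds (x := b))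
  rw [zero_sub] at h
  refine h.congr' ?_
  filter_upwards [hs.eventually_ne_atTop 0] with i hi
  field_simp

theorem hw_eigenvalue_asymptotics_general (alpha bphi brho kappa : ℝ)
    (p : ℕ) (hp : 1 ≤ p) (ky : ℤ)
    (a d : ℝ → ℂ) (bc : ℝ → ℂ) (lamp lamm : ℝ → ℂ)
    (ha : ∀ K : ℝ, a K = ((-(alpha / K) - bphi * K ^ p : ℝ) : ℂ))
    (hd : ∀ K : ℝ, d K = ((-alpha - brho * K ^ p : ℝ) : ℂ))
    (hbc : ∀ K : ℝ, bc K = ((alpha / K : ℝ) : ℂ) * ((alpha : ℂ) - Complex.I * (ky : ℂ) * (kappa : ℂ)))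
    (hlamp : ∀ K : ℝ, lamp K =
      ((a K + d K) + ((a K + d K) ^ 2 - 4 * (a K * d K - bc K)) ^ ((1 : ℂ) / 2)) / 2)
    (hlamm : ∀ K : ℝ, lamm K =
      ((a K + d K) - ((a K + d K) ^ 2 - 4 * (a K * d K - bc K)) ^ ((1 : ℂ) / 2)) / 2) :
    Tendsto (fun K : ℝ => lamp K / ((K : ℂ) ^ p)) atTop (nhds ((-(min bphi brho) : ℝ) : ℂ)) ∧
    Tendsto (fun K : ℝ => lamm K / ((K : ℂ) ^ p)) atTop (nhds ((-(max bphi brho) : ℝ) : ℂ)) := by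
  have hKp : Tendsto (fun K : ℝ => K ^ p) atTop atTop := tendsto_pow_atTop (by omega)
  have hinv : Tendsto (fun K : ℝ => alpha / K) atTop (𝓝 0) :=
    tendsto_const_nhds.div_atTop tendsto_id
  have ha' : Tendsto (fun K : ℝ => a K / ↑(K ^ p)) atTop (𝓝 ↑(-bphi)) := by
    simpa only [ha, Complex.ofReal_div] using
      (tendsto_sub_mul_div_self bphi hinv.neg hKp).ofReal
  have hd' : Tendsto (fun K : ℝ => d K / ↑(K ^ p)) atTop (𝓝 ↑(-brho)) := by
    simpa only [hd, Complex.ofReal_div] using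
      (tendsto_sub_mul_div_self brho tendsto_const_nhds hKp).ofReal
  have hbc' : Tendsto (fun K : ℝ => bc K / (↑(K ^ p) : ℂ) ^ 2) atTop (𝓝 0) := by
    have h := ((hinv.div_atTop ((tendsto_pow_atTop two_ne_zero).comp hKp)).ofReal).mul_const
      ((alpha : ℂ) - Complex.I * (ky : ℂ) * (kappa : ℂ))
    simp only [Complex.ofReal_zero, zero_mul] at h
    refine h.congr fun K => ?_
    rw [hbc, Function.comp_apply]
    push_cast
    ring
  obtain ⟨hplus, hminus⟩ := tendsto_quadratic_roots_div (hKp.eventually_gt_atTop 0)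
    (τ := fun K => a K + d K) (δ := fun K => a K * d K - bc K)
    (by simpa only [add_div, Complex.ofReal_add] using ha'.add hd')
    (by simpa only [sub_div, sq, mul_div_mul_comm, Complex.ofReal_mul, sub_zero] using
      (ha'.mul hd').sub hbc')
  rw [max_neg_neg] at hplus
  rw [min_neg_neg] at hminus
  constructor
  · simpa only [hlamp, Complex.sqrt, one_div, Complex.ofReal_pow] using hplus
  · simpa only [hlamm, Complex.sqrt, one_div, Complex.ofReal_pow] using hminus

/-- As K → ∞ (with k_y fixed), λ⁺_k/K^p → −min(β_φ,β_ρ) and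
λ⁻_k/K^p → −max(β_φ,β_ρ), where λ± are given by the quadratic formula with principal
square root, a = −α/K − β_φK^p, d = −α − β_ρK^p, bc = (α/K)(α − i k_y κ). -/
theorem hw_eigenvalue_asymptotics (alpha bphi brho kappa : ℝ)
    (halpha : 0 < alpha) (hbphi : 0 < bphi) (hbrho : 0 < brho) (hkappa : 0 < kappa)
    (p : ℕ) (hp : 1 ≤ p) (ky : ℤ)
    (a d : ℝ → ℂ) (bc : ℝ → ℂ) (lamp lamm : ℝ → ℂ)
    (ha : ∀ K : ℝ, a K = ((-(alpha / K) - bphi * K ^ p : ℝ) : ℂ))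
    (hd : ∀ K : ℝ, d K = ((-alpha - brho * K ^ p : ℝ) : ℂ))
    (hbc : ∀ K : ℝ, bc K = ((alpha / K : ℝ) : ℂ) * ((alpha : ℂ) - Complex.I * (ky : ℂ) * (kappa : ℂ)))
    (hlamp : ∀ K : ℝ, lamp K =
      ((a K + d K) + ((a K + d K) ^ 2 - 4 * (a K * d K - bc K)) ^ ((1 : ℂ) / 2)) / 2)
    (hlamm : ∀ K : ℝ, lamm K =
      ((a K + d K) - ((a K + d K) ^ 2 - 4 * (a K * d K - bc K)) ^ ((1 : ℂ) / 2)) / 2) :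
    Tendsto (fun K : ℝ => lamp K / ((K : ℂ) ^ p)) atTop (nhds ((-(min bphi brho) : ℝ) : ℂ)) ∧
    Tendsto (fun K : ℝ => lamm K / ((K : ℂ) ^ p)) atTop (nhds ((-(max bphi brho) : ℝ) : ℂ)) :=
  hw_eigenvalue_asymptotics_general alpha bphi brho kappa p hp ky a d bc lamp lamm ha hd hbc hlamp
    hlamm
end
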